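/- arXiv:1108.6000 — 3 statements merged into one kernel-verified Lean document; each statement's English description precedes it below -/
import Mathlib

section
/- Let q ≥ 1 and 0 < r < 1. Let (φ_{s,t} : 𝔹^q → 𝔹^q)_{0≤s≤t} be a family of univalent maps with φ_{s,s} = id and φ_{s,t} = φ_{u,t} ∘ φ_{s,u} for all 0 ≤ s ≤ u ≤ t. Let (u_n)_{n∈ℕ} be an increasing sequence in [0,∞) tending to ∞ such that φ_{u_n,u_m}(r𝔹^q) ⊆ r𝔹^q for all n ≤ m, and assume that for every s ≥ 0, φ_{s,t} → 0 uniformly on compact subsets of 𝔹^q as t → ∞. Let (ψ_n : r𝔹^q → ℂ^q)_{n∈ℕ} be univalent maps satisfying ψ_n = ψ_{n+1} ∘ φ_{u_n,u_{n+1}} on r𝔹^q for all n. Then: (1) for every s ≥ 0 and every compact K ⊂ 𝔹^q there is N ∈ ℕ such that for all m ≥ N one has φ_{s,u_m}(K) ⊂ r𝔹^q and ψ_m ∘ φ_{s,u_m} = ψ_N ∘ φ_{s,u_N} on K; (2) the maps f_s : 𝔹^q → ℂ^q defined by f_s(z) := lim_{m→∞} ψ_m(φ_{s,u_m}(z)) are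 univalent and satisfy f_s = f_t ∘ φ_{s,t} for all 0 ≤ s ≤ t; (3) ⋃_{t≥0} f_t(𝔹^q) = ⋃_{n∈ℕ} ψ_n(r𝔹^q). -/
open Metric MeasureTheory Set Filter

noncomputable section

/-- `ℂ^q` with its standard Hermitian inner product. -/
abbrev Cq (q : ℕ) := EuclideanSpace ℂ (Fin q)

/-- `Re⟨x, y⟩` for the standard Hermitian product on `ℂ^q`. -/
def reInner {q : ℕ} (x y : Cq q) : ℝ := (inner ℂ x y : ℂ).re

/-- `m(A) = min {Re⟨Az,z⟩ : |z| = 1}`. -/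
def mA {q : ℕ} (A : Cq q →L[ℂ] Cq q) : ℝ :=
  sInf {x : ℝ | ∃ z : Cq q, ‖z‖ = 1 ∧ x = reInner (A z) z}

/-- `k(A) = max {Re⟨Az,z⟩ : |z| = 1}`. -/
def kA {q : ℕ} (A : Cq q →L[ℂ] Cq q) : ℝ :=
  sSup {x : ℝ | ∃ z : Cq q, ‖z‖ = 1 ∧ x = reInner (A z) z}

instance {q : ℕ} : MeasurableSpace (Cq q) := borel _
instance {q : ℕ} : BorelSpace (Cq q) := ⟨rfl⟩

/-- A map is univalent on `U` if it is holomorphic and injective there. -/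
def IsUnivalentOn {q : ℕ} (f : Cq q → Cq q) (U : Set (Cq q)) : Prop :=
  DifferentiableOn ℂ f U ∧ InjOn f U

/-- `-h` is a Herglotz vector field of order `∞` on the unit ball `𝔹^q`. -/
def IsHerglotz (q : ℕ) (h : Cq q → ℝ → Cq q) : Prop :=
  (∀ z ∈ ball (0 : Cq q) 1, Measurable fun t : ℝ => h z t) ∧
  (∀ᵐ t ∂(volume.restrict (Ici (0:ℝ))),
    DifferentiableOn ℂ (fun z => h z t) (ball (0 : Cq q) 1) ∧
    ∀ z₀ ∈ ball (0 : Cq q) 1, ∃ x : ℝ → Cq q, x 0 = z₀ ∧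
      ∀ s ∈ Ici (0:ℝ), x s ∈ ball (0 : Cq q) 1 ∧
        HasDerivWithinAt x (-(h (x s) t)) (Ici 0) s) ∧
  (∀ K ⊆ ball (0 : Cq q) 1, IsCompact K → ∀ T > 0, ∃ c > 0,
    ∀ z ∈ K, ∀ t ∈ Icc (0:ℝ) T, ‖h z t‖ ≤ c)

/-- `(f_t)` is a locally Lipschitz solution of the Loewner PDE
`∂f_t(z)/∂t = Df_t(z)·h(z,t)`. -/
def IsLoewnerSolution (q : ℕ) (h : Cq q → ℝ → Cq q) (f : ℝ → Cq q → Cq q) : Prop :=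
  (∀ K ⊆ ball (0 : Cq q) 1, IsCompact K → ∀ T > 0, ∃ k > 0,
    ∀ z ∈ K, ∀ s t : ℝ, 0 ≤ s → s ≤ t → t ≤ T → ‖f t z - f s z‖ ≤ k * (t - s)) ∧
  (∀ᵐ t ∂(volume.restrict (Ici (0:ℝ))), ∀ z ∈ ball (0 : Cq q) 1,
    HasDerivAt (fun τ => f τ z) (fderiv ℂ (f t) z (h z t)) t)

/-- A locally Lipschitz univalent solution of the Loewner PDE. -/
def IsUnivalentSolution (q : ℕ) (h : Cq q → ℝ → Cq q) (f : ℝ → Cq q → Cq q) : Prop :=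
  (∀ t ∈ Ici (0:ℝ), IsUnivalentOn (f t) (ball 0 1)) ∧ IsLoewnerSolution q h f

/-- The range `⋃_{t ≥ 0} f_t(𝔹^q)` of a solution. -/
def LoewnerRange (q : ℕ) (f : ℝ → Cq q → Cq q) : Set (Cq q) :=
  ⋃ t ∈ Ici (0:ℝ), f t '' ball 0 1

/-- `Ω ⊆ ℂ^q` is biholomorphic to `ℂ^q`. -/
def BiholoToCq (q : ℕ) (Ω : Set (Cq q)) : Prop :=
  ∃ (Φ Ψ : Cq q → Cq q), DifferentiableOn ℂ Φ Ω ∧ Differentiable ℂ Ψ ∧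
    (∀ x ∈ Ω, Ψ (Φ x) = x) ∧ (∀ y : Cq q, Ψ y ∈ Ω ∧ Φ (Ψ y) = y)

/-- The class `𝒩` of holomorphic `g : 𝔹^q → ℂ^q` with `g(0) = 0` and
`Re⟨g(z),z⟩ > 0` for `z ≠ 0`. -/
def MemN (q : ℕ) (g : Cq q → Cq q) : Prop :=
  DifferentiableOn ℂ g (ball 0 1) ∧ g 0 = 0 ∧
    ∀ z ∈ ball (0 : Cq q) 1, z ≠ 0 → 0 < reInner (g z) z

/-- `h(z,t) = A(t)z + O(|z|²)`: for each `t ≥ 0`, `z ↦ h(z,t)` is holomorphic on `𝔹^q`,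
vanishes at `0`, and has differential `A(t)` at `0`. -/
def HasLinearPart (q : ℕ) (h : Cq q → ℝ → Cq q) (A : ℝ → (Cq q →L[ℂ] Cq q)) : Prop :=
  ∀ t ∈ Ici (0:ℝ), DifferentiableOn ℂ (fun z => h z t) (ball (0 : Cq q) 1) ∧
    h 0 t = 0 ∧ fderiv ℂ (fun z => h z t) 0 = A t

/-!
Fix `s ≥ 0` and a compact `K ⊆ 𝔹^q`. Since `φ_{s,t} → 0` uniformly on `K`, eventually
`φ_{s,u_N}(K) ⊆ r𝔹^q`, and then for `m ≥ N` the cocycle relation together with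
`ψ_N = ψ_m ∘ φ_{u_N,u_m}` on `r𝔹^q` shows that `ψ_m ∘ φ_{s,u_m}` no longer depends on `m` on `K`.
So `f_s` is locally one of the univalent maps `ψ_N ∘ φ_{s,u_N}`, and on two given points it is
one and the same such map; everything else follows from the cocycle relation.
-/

open Topology

theorem TendstoUniformlyOn.eventually_mapsTo_ball {ι X Y : Type*} [PseudoMetricSpace Y]
    {l : Filter ι} {F : ι → X → Y} {c : Y} {K : Set X}
    (h : TendstoUniformlyOn F (fun _ => c) l K) {r : ℝ} (hr : 0 < r) :
    ∀ᶠ i in l, MapsTo (F i) K (ball c r) :=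
  (Metric.tendstoUniformlyOn_iff.mp h r hr).mono fun _ hi z hz => by
    simpa only [mem_ball, dist_comm] using hi z hz

section Abstract

variable {α β : Type*}

structure IsEvolutionFamily (φ : ℝ → ℝ → α → α) (B : Set α) : Prop where
  mapsTo : ∀ ⦃s t⦄, 0 ≤ s → s ≤ t → MapsTo (φ s t) B B
  self : ∀ ⦃s⦄, 0 ≤ s → ∀ z ∈ B, φ s s z = z
  comp : ∀ ⦃s τ t⦄, 0 ≤ s → s ≤ τ → τ ≤ t → ∀ z ∈ B, φ s t z = φ τ t (φ s τ z)

structure IsCompatibleCharts [TopologicalSpace α] (φ : ℝ → ℝ → α → α) (B V : Set α)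
    (u : ℕ → ℝ) (ψ : ℕ → α → β) : Prop where
  evolution : IsEvolutionFamily φ B
  subset : V ⊆ B
  nonneg : ∀ n, 0 ≤ u n
  mono : Monotone u
  tendsto_atTop : Tendsto u atTop atTop
  mapsTo : ∀ ⦃n m⦄, n ≤ m → MapsTo (φ (u n) (u m)) V V
  absorbing : ∀ ⦃s⦄, 0 ≤ s → ∀ ⦃K⦄, K ⊆ B → IsCompact K → ∀ᶠ t in atTop, MapsTo (φ s t) K V
  compat : ∀ n, ∀ z ∈ V, ψ n z = ψ (n + 1) (φ (u n) (u (n + 1)) z)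

/-- The paper's `f_s(z) = lim_m ψ_m(φ_{s,u_m}(z))`; a junk value where the limit does not exist. -/
def chainLimit [TopologicalSpace β] [Nonempty β] (φ : ℝ → ℝ → α → α) (u : ℕ → ℝ)
    (ψ : ℕ → α → β) (s : ℝ) (z : α) : β :=
  limUnder atTop fun m => ψ m (φ s (u m) z)

namespace IsCompatibleCharts

variable [TopologicalSpace α] {φ : ℝ → ℝ → α → α} {B V : Set α} {u : ℕ → ℝ}
  {ψ : ℕ → α → β}

theorem comp_eq_of_le (h : IsCompatibleCharts φ B V u ψ) {n m : ℕ} (hnm : n ≤ m) {x : α}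
    (hx : x ∈ V) : ψ m (φ (u n) (u m) x) = ψ n x := by
  induction m, hnm using Nat.le_induction with
  | base => rw [h.evolution.self (h.nonneg n) x (h.subset hx)]
  | succ m hnm ih =>
    rw [h.evolution.comp (h.nonneg n) (h.mono hnm) (h.mono m.le_succ) x (h.subset hx),
      ← h.compat m _ (h.mapsTo hnm hx), ih]

theorem comp_eq_comp_of_le (h : IsCompatibleCharts φ B V u ψ) {s : ℝ} (hs : 0 ≤ s) {N m : ℕ}
    (hsN : s ≤ u N) (hNm : N ≤ m) {z : α} (hz : z ∈ B) (hzV : φ s (u N) z ∈ V) :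
    ψ m (φ s (u m) z) = ψ N (φ s (u N) z) := by
  rw [h.evolution.comp hs hsN (h.mono hNm) z hz, h.comp_eq_of_le hNm hzV]

theorem eventually_mapsTo (h : IsCompatibleCharts φ B V u ψ) {s : ℝ} (hs : 0 ≤ s) {K : Set α}
    (hKB : K ⊆ B) (hK : IsCompact K) : ∀ᶠ N in atTop, s ≤ u N ∧ MapsTo (φ s (u N)) K V :=
  (h.tendsto_atTop.eventually_ge_atTop s).and
    (h.tendsto_atTop.eventually (h.absorbing hs hKB hK))

theorem exists_stable (h : IsCompatibleCharts φ B V u ψ) {s : ℝ} (hs : 0 ≤ s) {K : Set α}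
    (hKB : K ⊆ B) (hK : IsCompact K) :
    ∃ N, ∀ m ≥ N, MapsTo (φ s (u m)) K V ∧
      ∀ z ∈ K, ψ m (φ s (u m) z) = ψ N (φ s (u N) z) := by
  obtain ⟨N, hN⟩ := eventually_atTop.mp (h.eventually_mapsTo hs hKB hK)
  exact ⟨N, fun m hm => ⟨(hN m hm).2, fun z hz =>
    h.comp_eq_comp_of_le hs (hN N le_rfl).1 hm (hKB hz) ((hN N le_rfl).2 hz)⟩⟩

variable [TopologicalSpace β] [T2Space β] [Nonempty β]

theorem eventually_eqOn_chainLimit (h : IsCompatibleCharts φ B V u ψ) {s : ℝ} (hs : 0 ≤ s)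
    {K : Set α} (hKB : K ⊆ B) (hK : IsCompact K) :
    ∀ᶠ N in atTop, s ≤ u N ∧ MapsTo (φ s (u N)) K V ∧
      EqOn (chainLimit φ u ψ s) (ψ N ∘ φ s (u N)) K := by
  obtain ⟨N₀, hN₀⟩ := eventually_atTop.mp (h.eventually_mapsTo hs hKB hK)
  filter_upwards [eventually_ge_atTop N₀] with N hN
  refine ⟨(hN₀ N hN).1, (hN₀ N hN).2, fun z hz => ?_⟩
  have hstable : ∀ᶠ m in atTop, ψ m (φ s (u m) z) = ψ N (φ s (u N) z) :=
    eventually_atTop.mpr ⟨N, fun m hm =>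
      h.comp_eq_comp_of_le hs (hN₀ N hN).1 hm (hKB hz) ((hN₀ N hN).2 hz)⟩
  exact (tendsto_const_nhds.congr' (hstable.mono fun _ hm => hm.symm)).limUnder_eq

theorem eventually_chainLimit_eq (h : IsCompatibleCharts φ B V u ψ) {s : ℝ} (hs : 0 ≤ s)
    {z : α} (hz : z ∈ B) :
    ∀ᶠ N in atTop, s ≤ u N ∧ φ s (u N) z ∈ V ∧ chainLimit φ u ψ s z = ψ N (φ s (u N) z) :=
  (h.eventually_eqOn_chainLimit hs (singleton_subset_iff.mpr hz) isCompact_singleton).mono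
    fun _ hN => ⟨hN.1, hN.2.1 rfl, hN.2.2 rfl⟩

theorem tendsto_chainLimit (h : IsCompatibleCharts φ B V u ψ) {s : ℝ} (hs : 0 ≤ s) {z : α}
    (hz : z ∈ B) :
    Tendsto (fun m => ψ m (φ s (u m) z)) atTop (𝓝 (chainLimit φ u ψ s z)) :=
  tendsto_const_nhds.congr' ((h.eventually_chainLimit_eq hs hz).mono fun _ hN => hN.2.2)

theorem chainLimit_eq_of_mem (h : IsCompatibleCharts φ B V u ψ) (n : ℕ) {x : α} (hx : x ∈ V) :
    chainLimit φ u ψ (u n) x = ψ n x := by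
  obtain ⟨N, hN⟩ := eventually_atTop.mp (h.eventually_chainLimit_eq (h.nonneg n) (h.subset hx))
  rw [(hN (max n N) (le_max_right _ _)).2.2, h.comp_eq_of_le (le_max_left _ _) hx]

theorem chainLimit_eq_comp (h : IsCompatibleCharts φ B V u ψ) {s t : ℝ} (hs : 0 ≤ s)
    (hst : s ≤ t) {z : α} (hz : z ∈ B) :
    chainLimit φ u ψ s z = chainLimit φ u ψ t (φ s t z) := by
  obtain ⟨N, ⟨-, -, hNs⟩, htN, -, hNt⟩ := ((h.eventually_chainLimit_eq hs hz).and
    (h.eventually_chainLimit_eq (hs.trans hst) (h.evolution.mapsTo hs hst hz))).exists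
  rw [hNs, hNt, h.evolution.comp hs hst htN z hz]

theorem iUnion_image_chainLimit (h : IsCompatibleCharts φ B V u ψ) :
    ⋃ t ∈ Ici (0 : ℝ), chainLimit φ u ψ t '' B = ⋃ n, ψ n '' V := by
  refine Subset.antisymm (iUnion₂_subset fun t ht => ?_) (iUnion_subset fun n => ?_)
  · rintro _ ⟨z, hz, rfl⟩
    obtain ⟨N, -, hzV, hN⟩ := (h.eventually_chainLimit_eq ht hz).exists
    exact mem_iUnion.mpr ⟨N, _, hzV, hN.symm⟩
  · rintro _ ⟨x, hx, rfl⟩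
    exact mem_biUnion (x := u n) (h.nonneg n) ⟨x, h.subset hx, h.chainLimit_eq_of_mem n hx⟩

theorem injOn_chainLimit (h : IsCompatibleCharts φ B V u ψ)
    (hφ : ∀ ⦃s t⦄, 0 ≤ s → s ≤ t → InjOn (φ s t) B) (hψ : ∀ n, InjOn (ψ n) V) {s : ℝ}
    (hs : 0 ≤ s) : InjOn (chainLimit φ u ψ s) B := by
  intro z₁ hz₁ z₂ hz₂ heq
  have hKB : ({z₁, z₂} : Set α) ⊆ B := insert_subset hz₁ (singleton_subset_iff.mpr hz₂)
  obtain ⟨N, hsN, hmaps, hf⟩ :=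
    (h.eventually_eqOn_chainLimit hs hKB (Set.toFinite _).isCompact).exists
  have h₁ : z₁ ∈ ({z₁, z₂} : Set α) := mem_insert _ _
  have h₂ : z₂ ∈ ({z₁, z₂} : Set α) := mem_insert_of_mem _ rfl
  exact hφ hs hsN hz₁ hz₂ (hψ N (hmaps h₁) (hmaps h₂) ((hf h₁).symm.trans (heq.trans (hf h₂))))

end IsCompatibleCharts

end Abstract

theorem IsCompatibleCharts.differentiableOn_chainLimit {E F : Type*} [NormedAddCommGroup E]
    [NormedSpace ℂ E] [LocallyCompactSpace E] [NormedAddCommGroup F] [NormedSpace ℂ F]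
    [Nonempty F] {φ : ℝ → ℝ → E → E} {B V : Set E} {u : ℕ → ℝ} {ψ : ℕ → E → F}
    (h : IsCompatibleCharts φ B V u ψ) (hB : IsOpen B) (hV : IsOpen V)
    (hφ : ∀ ⦃s t⦄, 0 ≤ s → s ≤ t → DifferentiableOn ℂ (φ s t) B)
    (hψ : ∀ n, DifferentiableOn ℂ (ψ n) V) {s : ℝ} (hs : 0 ≤ s) :
    DifferentiableOn ℂ (chainLimit φ u ψ s) B := by
  intro z hz
  obtain ⟨K, hK, hzK, hKB⟩ := exists_compact_subset hB hz
  obtain ⟨N, hsN, hmaps, hf⟩ := (h.eventually_eqOn_chainLimit hs hKB hK).exists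
  have hKz : K ∈ 𝓝 z := mem_interior_iff_mem_nhds.mp hzK
  have hcomp : DifferentiableAt ℂ (ψ N ∘ φ s (u N)) z :=
    ((hψ N).differentiableAt (hV.mem_nhds (hmaps (interior_subset hzK)))).comp z
      ((hφ hs hsN).differentiableAt (hB.mem_nhds hz))
  exact (hcomp.congr_of_eventuallyEq (Filter.mem_of_superset hKz hf)).differentiableWithinAt

theorem statement9_general (q : ℕ) (r : ℝ) (hr0 : 0 < r) (hr1 : r < 1)
    (φ : ℝ → ℝ → Cq q → Cq q)
    (hev1 : ∀ s t : ℝ, 0 ≤ s → s ≤ t → IsUnivalentOn (φ s t) (ball (0 : Cq q) 1) ∧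
      MapsTo (φ s t) (ball (0 : Cq q) 1) (ball (0 : Cq q) 1))
    (hev2 : ∀ s ∈ Ici (0:ℝ), ∀ z ∈ ball (0 : Cq q) 1, φ s s z = z)
    (hev3 : ∀ s u t : ℝ, 0 ≤ s → s ≤ u → u ≤ t → ∀ z ∈ ball (0 : Cq q) 1,
      φ s t z = φ u t (φ s u z))
    (u : ℕ → ℝ) (hu0 : ∀ n, 0 ≤ u n) (humono : StrictMono u)
    (hutop : Tendsto u atTop atTop)
    (hur : ∀ n m : ℕ, n ≤ m →
      MapsTo (φ (u n) (u m)) (ball (0 : Cq q) r) (ball (0 : Cq q) r))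
    (hconv : ∀ s ∈ Ici (0:ℝ), ∀ K ⊆ ball (0 : Cq q) 1, IsCompact K →
      TendstoUniformlyOn (fun t z => φ s t z) (fun _ => 0) atTop K)
    (ψ : ℕ → Cq q → Cq q)
    (hψuniv : ∀ n : ℕ, IsUnivalentOn (ψ n) (ball (0 : Cq q) r))
    (hψ : ∀ n : ℕ, ∀ z ∈ ball (0 : Cq q) r, ψ n z = ψ (n + 1) (φ (u n) (u (n + 1)) z)) :
    (∀ s ∈ Ici (0:ℝ), ∀ K ⊆ ball (0 : Cq q) 1, IsCompact K → ∃ N : ℕ, ∀ m ≥ N,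
      (∀ z ∈ K, φ s (u m) z ∈ ball (0 : Cq q) r) ∧
      ∀ z ∈ K, ψ m (φ s (u m) z) = ψ N (φ s (u N) z)) ∧
    ∃ f : ℝ → Cq q → Cq q,
      (∀ s ∈ Ici (0:ℝ), ∀ z ∈ ball (0 : Cq q) 1,
        Tendsto (fun m : ℕ => ψ m (φ s (u m) z)) atTop (nhds (f s z))) ∧
      (∀ s ∈ Ici (0:ℝ), IsUnivalentOn (f s) (ball (0 : Cq q) 1)) ∧
      (∀ s t : ℝ, 0 ≤ s → s ≤ t → ∀ z ∈ ball (0 : Cq q) 1, f s z = f t (φ s t z)) ∧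
      (⋃ t ∈ Ici (0:ℝ), f t '' ball (0 : Cq q) 1) =
        ⋃ n : ℕ, ψ n '' ball (0 : Cq q) r := by
  have h : IsCompatibleCharts φ (ball 0 1) (ball 0 r) u ψ :=
    { evolution := ⟨fun s t hs hst => (hev1 s t hs hst).2, hev2, hev3⟩
      subset := ball_subset_ball hr1.le
      nonneg := hu0
      mono := humono.monotone
      tendsto_atTop := hutop
      mapsTo := hur
      absorbing := fun s hs K hKB hK => (hconv s hs K hKB hK).eventually_mapsTo_ball hr0
      compat := hψ }
  refine ⟨fun s hs K hKB hK => h.exists_stable hs hKB hK, chainLimit φ u ψ,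
    fun s hs z hz => h.tendsto_chainLimit hs hz, fun s hs => ⟨?_, ?_⟩, fun s t hs hst z hz => h.chainLimit_eq_comp hs hst hz,
    h.iUnion_image_chainLimit⟩
  · exact h.differentiableOn_chainLimit isOpen_ball isOpen_ball
      (fun s t hs hst => (hev1 s t hs hst).1.1) (fun n => (hψuniv n).1) hs
  · exact h.injOn_chainLimit (fun s t hs hst => (hev1 s t hs hst).1.2) (fun n => (hψuniv n).2) hs

/-- Construction of the Loewner chain from the univalent maps on the abstract basin:
the limits `f_s(z) = lim_m ψ_m(φ_{s,u_m}(z))` exist, are univalent, satisfy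
`f_s = f_t ∘ φ_{s,t}`, and `⋃_{t≥0} f_t(𝔹^q) = ⋃_n ψ_n(r𝔹^q)`. -/
theorem statement9 (q : ℕ) (hq : 1 ≤ q) (r : ℝ) (hr0 : 0 < r) (hr1 : r < 1)
    (φ : ℝ → ℝ → Cq q → Cq q)
    (hev1 : ∀ s t : ℝ, 0 ≤ s → s ≤ t → IsUnivalentOn (φ s t) (ball (0 : Cq q) 1) ∧
      MapsTo (φ s t) (ball (0 : Cq q) 1) (ball (0 : Cq q) 1))
    (hev2 : ∀ s ∈ Ici (0:ℝ), ∀ z ∈ ball (0 : Cq q) 1, φ s s z = z)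
    (hev3 : ∀ s u t : ℝ, 0 ≤ s → s ≤ u → u ≤ t → ∀ z ∈ ball (0 : Cq q) 1,
      φ s t z = φ u t (φ s u z))
    (u : ℕ → ℝ) (hu0 : ∀ n, 0 ≤ u n) (humono : StrictMono u)
    (hutop : Tendsto u atTop atTop)
    (hur : ∀ n m : ℕ, n ≤ m →
      MapsTo (φ (u n) (u m)) (ball (0 : Cq q) r) (ball (0 : Cq q) r))
    (hconv : ∀ s ∈ Ici (0:ℝ), ∀ K ⊆ ball (0 : Cq q) 1, IsCompact K →
      TendstoUniformlyOn (fun t z => φ s t z) (fun _ => 0) atTop K)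
    (ψ : ℕ → Cq q → Cq q)
    (hψuniv : ∀ n : ℕ, IsUnivalentOn (ψ n) (ball (0 : Cq q) r))
    (hψ : ∀ n : ℕ, ∀ z ∈ ball (0 : Cq q) r, ψ n z = ψ (n + 1) (φ (u n) (u (n + 1)) z)) :
    (∀ s ∈ Ici (0:ℝ), ∀ K ⊆ ball (0 : Cq q) 1, IsCompact K → ∃ N : ℕ, ∀ m ≥ N,
      (∀ z ∈ K, φ s (u m) z ∈ ball (0 : Cq q) r) ∧
      ∀ z ∈ K, ψ m (φ s (u m) z) = ψ N (φ s (u N) z)) ∧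
    ∃ f : ℝ → Cq q → Cq q,
      (∀ s ∈ Ici (0:ℝ), ∀ z ∈ ball (0 : Cq q) 1,
        Tendsto (fun m : ℕ => ψ m (φ s (u m) z)) atTop (nhds (f s z))) ∧
      (∀ s ∈ Ici (0:ℝ), IsUnivalentOn (f s) (ball (0 : Cq q) 1)) ∧
      (∀ s t : ℝ, 0 ≤ s → s ≤ t → ∀ z ∈ ball (0 : Cq q) 1, f s z = f t (φ s t z)) ∧
      (⋃ t ∈ Ici (0:ℝ), f t '' ball (0 : Cq q) 1) =
        ⋃ n : ℕ, ψ n '' ball (0 : Cq q) r :=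
  statement9_general q r hr0 hr1 φ hev1 hev2 hev3 u hu0 humono hutop hur hconv ψ hψuniv hψ
end
end

section
/- Let h ∈ 𝒩 and let A : ℂ^q → ℂ^q be the differential of h at 0. Then for every z ∈ 𝔹^q \ {0}: Re⟨Az,z⟩·(1−|z|)/(1+|z|) ≤ Re⟨h(z),z⟩ ≤ Re⟨Az,z⟩·(1+|z|)/(1−|z|). -/
/-!
Restrict `h` to the complex line through the unit vector `u = z / |z|`: the function
`g(w) = ⟪u, h(w u)⟫ / w` is holomorphic on the unit disc, satisfies
`Re⟨h(w u), w u⟩ = |w|² Re g(w)` and `g(0) = ⟪u, A u⟫`, and has positive real part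
(at `0` by the maximum modulus principle applied to `exp (-g)`). The estimate is then the
classical Harnack inequality for `g` at `w = |z|`, which follows from the Schwarz lemma applied
to the Cayley transform `(g - g(0)) / (g + conj g(0))`.
-/

open Metric MeasureTheory Set Filter

noncomputable section

open Topology ComplexConjugate
open scoped InnerProductSpace

theorem Complex.normSq_add_conj_sub_normSq_sub (z a : ℂ) :
    Complex.normSq (z + conj a) - Complex.normSq (z - a) = 4 * z.re * a.re := by
  simp only [Complex.normSq_apply, Complex.add_re, Complex.add_im, Complex.sub_re,
    Complex.sub_im, Complex.conj_re, Complex.conj_im]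
  ring

theorem Complex.norm_sub_lt_norm_add_conj {z a : ℂ} (hz : 0 < z.re) (ha : 0 < a.re) :
    ‖z - a‖ < ‖z + conj a‖ := by
  rw [← sq_lt_sq₀ (norm_nonneg _) (norm_nonneg _), Complex.sq_norm, Complex.sq_norm]
  nlinarith [Complex.normSq_add_conj_sub_normSq_sub z a, mul_pos hz ha]

theorem Complex.sq_re_sub_le_of_norm_sub_le {z a : ℂ} {ρ : ℝ} (hρ0 : 0 ≤ ρ) (hρ1 : ρ ≤ 1)
    (h : ‖z - a‖ ≤ ρ * ‖z + conj a‖) : (z.re - a.re) ^ 2 ≤ ρ ^ 2 * (z.re + a.re) ^ 2 := by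
  have hsq := pow_le_pow_left₀ (norm_nonneg _) h 2
  rw [mul_pow, Complex.sq_norm, Complex.sq_norm, Complex.normSq_apply,
    Complex.normSq_apply] at hsq
  simp only [Complex.add_re, Complex.add_im, Complex.sub_re, Complex.sub_im, Complex.conj_re,
    Complex.conj_im] at hsq
  nlinarith [mul_nonneg (sub_nonneg.2 (pow_le_one₀ (n := 2) hρ0 hρ1)) (sq_nonneg (z.im - a.im))]

theorem harnack_bounds_of_sq_sub_le {x α ρ : ℝ} (hx : 0 < x) (hα : 0 < α) (hρ0 : 0 ≤ ρ)
    (hρ1 : ρ < 1) (h : (x - α) ^ 2 ≤ ρ ^ 2 * (x + α) ^ 2) :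
    α * ((1 - ρ) / (1 + ρ)) ≤ x ∧ x ≤ α * ((1 + ρ) / (1 - ρ)) := by
  obtain ⟨hlo, hhi⟩ := abs_le_of_sq_le_sq' (a := x - α) (b := ρ * (x + α))
    (by rwa [mul_pow]) (by positivity)
  constructor
  · rw [← mul_div_assoc, div_le_iff₀ (by linarith)]
    nlinarith
  · rw [← mul_div_assoc, le_div_iff₀ (by linarith)]
    nlinarith

theorem re_pos_at_zero_of_re_pos_of_ne_zero {g : ℂ → ℂ} (hg : DifferentiableOn ℂ g (ball 0 1))
    (hpos : ∀ w ∈ ball (0 : ℂ) 1, w ≠ 0 → 0 < (g w).re) : 0 < (g 0).re := by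
  have hcont : ContinuousAt (fun w => (g w).re) 0 :=
    Complex.continuous_re.continuousAt.comp
      (hg.differentiableAt (ball_mem_nhds 0 one_pos)).continuousAt
  have hnonneg : 0 ≤ (g 0).re := by
    refine ge_of_tendsto (hcont.mono_left nhdsWithin_le_nhds : Tendsto _ (𝓝[≠] (0 : ℂ)) _) ?_
    filter_upwards [self_mem_nhdsWithin, nhdsWithin_le_nhds (ball_mem_nhds (0 : ℂ) one_pos)]
      with w hw0 hw
    exact (hpos w hw hw0).le
  refine hnonneg.lt_of_ne fun hzero => ?_
  -- `‖exp (-g)‖ = exp (-Re g)` would attain its maximum `1` at the centre.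
  have hmax : IsMaxOn (norm ∘ fun w => Complex.exp (-g w)) (ball 0 1) 0 := fun w hw => by
    have hw_nonneg : 0 ≤ (g w).re := by
      rcases eq_or_ne w 0 with rfl | hw0
      exacts [hnonneg, (hpos w hw hw0).le]
    change ‖Complex.exp (-g w)‖ ≤ ‖Complex.exp (-g 0)‖
    rw [Complex.norm_exp, Complex.norm_exp, Real.exp_le_exp, Complex.neg_re, Complex.neg_re]
    linarith
  have hhalf : (1 / 2 : ℂ) ∈ ball (0 : ℂ) 1 := by norm_num
  have hconst := congrArg norm (Complex.eqOn_of_isPreconnected_of_isMaxOn_norm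
    (convex_ball 0 1).isPreconnected isOpen_ball hg.neg.cexp (mem_ball_self one_pos) hmax hhalf)
  simp only [Function.const_apply, Pi.neg_apply, Complex.norm_exp, Complex.neg_re,
    Real.exp_eq_exp, neg_inj, ← hzero] at hconst
  exact (hpos _ hhalf (by norm_num)).ne' hconst

theorem re_harnack_of_re_pos {g : ℂ → ℂ} (hg : DifferentiableOn ℂ g (ball 0 1))
    (hpos : ∀ w ∈ ball (0 : ℂ) 1, 0 < (g w).re) {w : ℂ} (hw : w ∈ ball (0 : ℂ) 1) :
    (g 0).re * ((1 - ‖w‖) / (1 + ‖w‖)) ≤ (g w).re ∧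
      (g w).re ≤ (g 0).re * ((1 + ‖w‖) / (1 - ‖w‖)) := by
  set a := g 0
  have ha : 0 < a.re := hpos 0 (mem_ball_self one_pos)
  have hden : ∀ v ∈ ball (0 : ℂ) 1, 0 < ‖g v + conj a‖ := fun v hv =>
    (norm_nonneg _).trans_lt (Complex.norm_sub_lt_norm_add_conj (hpos v hv) ha)
  have hmaps : MapsTo (fun v => (g v - a) / (g v + conj a)) (ball 0 1) (closedBall 0 1) :=
    fun v hv => by
      rw [mem_closedBall_zero_iff, norm_div, div_le_one (hden v hv)]
      exact (Complex.norm_sub_lt_norm_add_conj (hpos v hv) ha).le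
  have hschwarz := Complex.norm_le_norm_of_mapsTo_ball
    ((hg.sub_const a).div (hg.add_const _) fun v hv => norm_pos_iff.1 (hden v hv)) hmaps
    (by simp [a]) (mem_ball_zero_iff.1 hw)
  rw [Pi.div_apply, norm_div, div_le_iff₀ (hden w hw)] at hschwarz
  have hw1 : ‖w‖ < 1 := mem_ball_zero_iff.1 hw
  exact harnack_bounds_of_sq_sub_le (hpos w hw) ha (norm_nonneg w) hw1
    (Complex.sq_re_sub_le_of_norm_sub_le (norm_nonneg w) hw1.le hschwarz)

section Slice

variable {E : Type*} [NormedAddCommGroup E] [InnerProductSpace ℂ E]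

def sliceQuotient (h : E → E) (u : E) : ℂ → ℂ :=
  dslope (fun w : ℂ => ⟪u, h (w • u)⟫_ℂ) 0

theorem differentiableOn_sliceQuotient {h : E → E} (hd : DifferentiableOn ℂ h (ball 0 1))
    {u : E} (hu : ‖u‖ ≤ 1) : DifferentiableOn ℂ (sliceQuotient h u) (ball 0 1) := by
  refine (Complex.differentiableOn_dslope (ball_mem_nhds _ one_pos)).2 ?_
  refine (innerSL ℂ u).differentiable.comp_differentiableOn
    (hd.comp (differentiable_id.smul_const u).differentiableOn fun w hw => ?_)
  rw [mem_ball_zero_iff] at hw ⊢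
  rw [norm_smul]
  exact (mul_le_of_le_one_right (norm_nonneg w) hu).trans_lt hw

theorem sliceQuotient_zero {h : E → E} (hd : DifferentiableAt ℂ h 0) (u : E) :
    sliceQuotient h u 0 = ⟪u, fderiv ℂ h 0 u⟫_ℂ := by
  have hline : HasDerivAt (fun w : ℂ => w • u) u 0 := by
    simpa using (hasDerivAt_id (0 : ℂ)).smul_const u
  have hcomp : HasDerivAt (fun w : ℂ => h (w • u)) (fderiv ℂ h 0 u) 0 :=
    hd.hasFDerivAt.comp_hasDerivAt_of_eq 0 hline (zero_smul ℂ u).symm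
  rw [sliceQuotient, dslope_same]
  exact ((innerSL ℂ u).hasFDerivAt.comp_hasDerivAt 0 hcomp).deriv

theorem re_inner_apply_smul_self {h : E → E} (h0 : h 0 = 0) (u : E) (w : ℂ) :
    (⟪h (w • u), w • u⟫_ℂ).re = Complex.normSq w * (sliceQuotient h u w).re := by
  have hslope : ⟪u, h (w • u)⟫_ℂ = w * sliceQuotient h u w := by
    simpa [h0, sliceQuotient] using (sub_smul_dslope (fun w : ℂ => ⟪u, h (w • u)⟫_ℂ) 0 w).symm
  rw [inner_smul_right, ← inner_conj_symm, hslope, map_mul, ← mul_assoc, Complex.mul_conj,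
    Complex.re_ofReal_mul, Complex.conj_re]

theorem re_inner_map_smul_self (A : E →L[ℂ] E) (u : E) (w : ℂ) :
    (⟪A (w • u), w • u⟫_ℂ).re = Complex.normSq w * (⟪u, A u⟫_ℂ).re := by
  rw [map_smul, inner_smul_left, inner_smul_right, ← mul_assoc, mul_comm (conj w),
    Complex.mul_conj, ← inner_conj_symm, Complex.re_ofReal_mul, Complex.conj_re]

variable {h : E → E} (hd : DifferentiableOn ℂ h (ball 0 1)) (h0 : h 0 = 0)
  (hpos : ∀ z ∈ ball (0 : E) 1, z ≠ 0 → 0 < (⟪h z, z⟫_ℂ).re)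
include h0 hpos

theorem re_sliceQuotient_pos_of_ne {u : E} (hu : ‖u‖ = 1) {w : ℂ} (hw : w ∈ ball (0 : ℂ) 1)
    (hw0 : w ≠ 0) : 0 < (sliceQuotient h u w).re := by
  have hwu : w • u ∈ ball (0 : E) 1 := by simpa [norm_smul, hu] using hw
  have hwu0 : w • u ≠ 0 := smul_ne_zero hw0 (norm_ne_zero_iff.1 (by simp [hu]))
  have hre := hpos _ hwu hwu0
  rw [re_inner_apply_smul_self h0] at hre
  exact pos_of_mul_pos_right hre (Complex.normSq_nonneg w)

include hd

theorem re_sliceQuotient_pos {u : E} (hu : ‖u‖ = 1) {w : ℂ} (hw : w ∈ ball (0 : ℂ) 1) :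
    0 < (sliceQuotient h u w).re := by
  rcases eq_or_ne w 0 with rfl | hw0
  · exact re_pos_at_zero_of_re_pos_of_ne_zero (differentiableOn_sliceQuotient hd hu.le)
      fun v hv hv0 => re_sliceQuotient_pos_of_ne h0 hpos hu hv hv0
  · exact re_sliceQuotient_pos_of_ne h0 hpos hu hw hw0

theorem re_inner_fderiv_harnack {z : E} (hz : z ∈ ball (0 : E) 1) (hz0 : z ≠ 0) :
    (⟪fderiv ℂ h 0 z, z⟫_ℂ).re * ((1 - ‖z‖) / (1 + ‖z‖)) ≤ (⟪h z, z⟫_ℂ).re ∧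
      (⟪h z, z⟫_ℂ).re ≤ (⟪fderiv ℂ h 0 z, z⟫_ℂ).re * ((1 + ‖z‖) / (1 - ‖z‖)) := by
  set u : E := (‖z‖ : ℂ)⁻¹ • z
  have hu : ‖u‖ = 1 := by simp [u, norm_smul, hz0]
  have hzu : (‖z‖ : ℂ) • u = z := by simp [u, smul_smul, hz0]
  have hzball : (‖z‖ : ℂ) ∈ ball (0 : ℂ) 1 := by simpa using hz
  obtain ⟨hlower, hupper⟩ := re_harnack_of_re_pos (differentiableOn_sliceQuotient hd hu.le)
    (fun w hw => re_sliceQuotient_pos hd h0 hpos hu hw) hzball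
  have hAz := re_inner_map_smul_self (fderiv ℂ h 0) u ‖z‖
  have hhz := re_inner_apply_smul_self h0 u ‖z‖
  rw [hzu, ← sliceQuotient_zero (hd.differentiableAt (ball_mem_nhds 0 one_pos))] at hAz
  rw [hzu] at hhz
  rw [Complex.norm_real, norm_norm] at hlower hupper
  rw [hAz, hhz, mul_assoc, mul_assoc]
  exact ⟨mul_le_mul_of_nonneg_left hlower (Complex.normSq_nonneg _),
    mul_le_mul_of_nonneg_left hupper (Complex.normSq_nonneg _)⟩

end Slice

theorem statement12_general (q : ℕ) (h : Cq q → Cq q) (hN : MemN q h)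
    (A : Cq q →L[ℂ] Cq q) (hA : fderiv ℂ h 0 = A) :
    ∀ z ∈ ball (0 : Cq q) 1, z ≠ 0 →
      reInner (A z) z * ((1 - ‖z‖) / (1 + ‖z‖)) ≤ reInner (h z) z ∧
      reInner (h z) z ≤ reInner (A z) z * ((1 + ‖z‖) / (1 - ‖z‖)) := by
  obtain ⟨hd, h0, hpos⟩ := hN
  intro z hz hz0
  rw [← hA]
  exact re_inner_fderiv_harnack hd h0 hpos hz hz0

/-- Gurganus' estimate: for `h ∈ 𝒩` with differential `A` at `0`,
`Re⟨Az,z⟩·(1-|z|)/(1+|z|) ≤ Re⟨h(z),z⟩ ≤ Re⟨Az,z⟩·(1+|z|)/(1-|z|)`. -/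
theorem statement12 (q : ℕ) (hq : 1 ≤ q) (h : Cq q → Cq q) (hN : MemN q h)
    (A : Cq q →L[ℂ] Cq q) (hA : fderiv ℂ h 0 = A) :
    ∀ z ∈ ball (0 : Cq q) 1, z ≠ 0 →
      reInner (A z) z * ((1 - ‖z‖) / (1 + ‖z‖)) ≤ reInner (h z) z ∧
      reInner (h z) z ≤ reInner (A z) z * ((1 + ‖z‖) / (1 - ‖z‖)) :=
  statement12_general q h hN A hA
end
end

section
/- Let h ∈ 𝒩 and let A : ℂ^q → ℂ^q be the differential of h at 0. Then for every r with 0 ≤ r < 1 and every z ∈ 𝔹^q with |z| ≤ r one has |h(z)| ≤ 4r/(1−r)²·‖A‖, where ‖A‖ is the operator norm of A. -/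
open Metric MeasureTheory Set Filter

noncomputable section

/-! Along the complex line through `v`, `ζ ↦ ⟪v, h (ζ • v)⟫ / ζ` is holomorphic with nonnegative
real part and value `⟪v, A v⟫` at `0`, so the Borel–Carathéodory estimate bounds it; at a unit
vector `u = z / ‖z‖` this controls the component of `h z` along `z`. For a unit `b ⊥ u`, the
same estimate at `v = u + x • b`, `‖x‖ = 1 - ‖z‖`, bounds an expression `P x + conj x * Q x`
with `P`, `Q` holomorphic, and the maximum modulus principle applied to `x * P x + ‖x‖² * Q x`
isolates `Q 0 = ⟪b, h z⟫ - ‖z‖ * ⟪b, A u⟫`. Adding the two components and an elementary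
polynomial inequality gives `4r/(1-r)²·‖A‖`. -/

open Topology ComplexConjugate InnerProductSpace

theorem mul_one_add_sq_div_two_lt_one {ρ : ℝ} (hρ0 : 0 ≤ ρ) (hρ1 : ρ < 1) :
    ρ * (1 + (1 - ρ) ^ 2 / 2) < 1 := by
  nlinarith [mul_pos (sub_pos.2 hρ1) (sub_pos.2 hρ1), mul_nonneg hρ0 (sq_nonneg (1 - ρ))]

theorem one_add_sq_div_two_cube_mul_le {ρ : ℝ} (hρ0 : 0 ≤ ρ) (hρ1 : ρ ≤ 1) :
    (1 + (1 - ρ) ^ 2 / 2) ^ 3 * ρ * (1 - ρ) ≤ (1 + ρ) * (1 - ρ * (1 + (1 - ρ) ^ 2 / 2)) := by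
  obtain ⟨σ, rfl⟩ : ∃ σ, ρ = 1 - σ := ⟨1 - ρ, by ring⟩
  have hσ0 : 0 ≤ σ := by linarith
  have hσ1 : 0 ≤ 1 - σ := by linarith
  ring_nf
  nlinarith [mul_nonneg hσ0 hσ0, mul_nonneg (mul_nonneg hσ0 hσ0) hσ0, pow_nonneg hσ0 4,
    pow_nonneg hσ0 5, pow_nonneg hσ0 6, pow_nonneg hσ0 7, mul_nonneg hσ0 hσ1,
    mul_nonneg (pow_nonneg hσ0 3) hσ1, mul_nonneg (pow_nonneg hσ0 5) hσ1,
    mul_nonneg (pow_nonneg hσ0 6) hσ1]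

theorem growth_bound_le {ρ a : ℝ} (hρ0 : 0 ≤ ρ) (hρ1 : ρ < 1) (ha : 0 ≤ a) :
    ρ * a + 2 * a * ρ ^ 2 / (1 - ρ) + (ρ * a + 2 * a * (1 + (1 - ρ) ^ 2 / 2) ^ 3 * ρ ^ 2 /
      (1 - ρ * (1 + (1 - ρ) ^ 2 / 2)) / (1 - ρ)) ≤ 4 * ρ / (1 - ρ) ^ 2 * a := by
  set S := 1 + (1 - ρ) ^ 2 / 2
  have h1 : 0 < 1 - ρ := sub_pos.2 hρ1
  have h2 : 0 < 1 - ρ * S := sub_pos.2 (mul_one_add_sq_div_two_lt_one hρ0 hρ1)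
  have htangential : 2 * a * S ^ 3 * ρ ^ 2 / (1 - ρ * S) / (1 - ρ) ≤
      2 * a * (1 + ρ) * ρ / (1 - ρ) ^ 2 := by
    have hkey : S ^ 3 * ρ * (1 - ρ) ≤ (1 + ρ) * (1 - ρ * S) :=
      one_add_sq_div_two_cube_mul_le hρ0 hρ1.le
    rw [div_div, div_le_div_iff₀ (by positivity) (by positivity)]
    calc 2 * a * S ^ 3 * ρ ^ 2 * (1 - ρ) ^ 2 = 2 * a * ρ * (1 - ρ) * (S ^ 3 * ρ * (1 - ρ)) := by
          ring
      _ ≤ 2 * a * ρ * (1 - ρ) * ((1 + ρ) * (1 - ρ * S)) := by gcongr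
      _ = 2 * a * (1 + ρ) * ρ * ((1 - ρ * S) * (1 - ρ)) := by ring
  calc _ ≤ ρ * a + 2 * a * ρ ^ 2 / (1 - ρ) + (ρ * a + 2 * a * (1 + ρ) * ρ / (1 - ρ) ^ 2) := by
        gcongr
    _ = 4 * ρ / (1 - ρ) ^ 2 * a := by
        field_simp
        ring

namespace Complex

theorem norm_sub_le_of_re_nonneg {p : ℂ → ℂ} {R : ℝ} (hp : DifferentiableOn ℂ p (ball 0 R))
    (hre : ∀ w ∈ ball (0 : ℂ) R, 0 ≤ (p w).re) {z : ℂ} (hz : z ∈ ball (0 : ℂ) R) :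
    ‖p z - p 0‖ ≤ 2 * (p 0).re * ‖z‖ / (R - ‖z‖) := by
  have hR : 0 < R := pos_of_mem_ball hz
  have hδ : ∀ δ > 0, ‖p z - p 0‖ ≤ 2 * ((p 0).re + δ) * ‖z‖ / (R - ‖z‖) := by
    intro δ hδ
    rw [norm_sub_rev]
    refine borelCaratheodory_zero (f := fun w => p 0 - p w)
      (by linarith [hre 0 (mem_ball_self hR)]) ((differentiableOn_const _).sub hp)
      (fun w hw => ?_) hR hz (sub_self _)
    simp only [mem_ofPred_eq, sub_re]
    linarith [hre w hw]
  have hlim : Tendsto (fun δ => 2 * ((p 0).re + δ) * ‖z‖ / (R - ‖z‖)) (𝓝[>] 0)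
      (𝓝 (2 * (p 0).re * ‖z‖ / (R - ‖z‖))) :=
    tendsto_nhdsWithin_of_tendsto_nhds <|
      (by fun_prop : Continuous fun δ : ℝ => 2 * ((p 0).re + δ) * ‖z‖ / (R - ‖z‖)).tendsto' 0 _
        (by simp)
  exact ge_of_tendsto hlim (eventually_nhdsWithin_of_forall hδ)

/-- `F x = x * P x + ε² * Q x` is holomorphic and equals `x * (P x + conj x * Q x)` on the circle
`‖x‖ = ε`, so the maximum modulus principle bounds `F 0 = ε² * Q 0`. -/
theorem mul_norm_le_of_norm_add_conj_mul_le {P Q : ℂ → ℂ} {ε M : ℝ} (hε : 0 < ε)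
    (hP : DifferentiableOn ℂ P (closedBall 0 ε)) (hQ : DifferentiableOn ℂ Q (closedBall 0 ε))
    (hM : ∀ x ∈ sphere (0 : ℂ) ε, ‖P x + conj x * Q x‖ ≤ M) : ε * ‖Q 0‖ ≤ M := by
  set F : ℂ → ℂ := fun x => x * P x + (ε : ℂ) ^ 2 * Q x
  have hF : DiffContOnCl ℂ F (ball 0 ε) := by
    refine DifferentiableOn.diffContOnCl ?_
    rw [closure_ball 0 hε.ne']
    exact (differentiableOn_id.mul hP).add ((differentiableOn_const _).mul hQ)
  have hFsphere : ∀ x ∈ frontier (ball (0 : ℂ) ε), ‖F x‖ ≤ ε * M := by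
    intro x hx
    rw [frontier_ball 0 hε.ne'] at hx
    have hxε : ‖x‖ = ε := by simpa using hx
    have hFx : F x = x * (P x + conj x * Q x) := by
      rw [mul_add, ← mul_assoc, mul_conj', hxε]
    rw [hFx, norm_mul, hxε]
    exact mul_le_mul_of_nonneg_left (hM x hx) hε.le
  have hF0 := norm_le_of_forall_mem_frontier_norm_le isBounded_ball hF hFsphere
    (subset_closure (mem_ball_self hε))
  simp only [F, zero_mul, zero_add, norm_mul, norm_pow, norm_real, Real.norm_of_nonneg hε.le] at hF0
  nlinarith

end Complex

section InnerProductSpace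

variable {E : Type*} [NormedAddCommGroup E] [InnerProductSpace ℂ E]

theorem norm_inner_apply_le (A : E →L[ℂ] E) (b u : E) : ‖⟪b, A u⟫_ℂ‖ ≤ ‖b‖ * ‖A‖ * ‖u‖ :=
  calc ‖⟪b, A u⟫_ℂ‖ ≤ ‖b‖ * ‖A u‖ := norm_inner_le_norm _ _
    _ ≤ ‖b‖ * (‖A‖ * ‖u‖) := by gcongr; exact A.le_opNorm u
    _ = ‖b‖ * ‖A‖ * ‖u‖ := by ring

theorem norm_le_add_of_norm_inner_le {u y : E} (hu : ‖u‖ = 1) {a c : ℝ} (hc : 0 ≤ c)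
    (ha : ‖⟪u, y⟫_ℂ‖ ≤ a) (hb : ∀ b : E, ‖b‖ = 1 → ⟪u, b⟫_ℂ = 0 → ‖⟪b, y⟫_ℂ‖ ≤ c) :
    ‖y‖ ≤ a + c := by
  set w := y - ⟪u, y⟫_ℂ • u
  have hy : y = ⟪u, y⟫_ℂ • u + w := by simp [w]
  have huw : ⟪u, w⟫_ℂ = 0 := by simp [w, inner_self_eq_norm_sq_to_K, hu]
  have hw : ‖w‖ ≤ c := by
    rcases eq_or_ne w 0 with hw0 | hw0
    · simpa [hw0] using hc
    set b := (‖w‖ : ℂ)⁻¹ • w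
    have hub : ⟪u, b⟫_ℂ = 0 := by simp [b, huw]
    have hby : ⟪b, y⟫_ℂ = ‖w‖ := by
      have hbu : ⟪b, u⟫_ℂ = 0 := by rw [← inner_conj_symm, hub, map_zero]
      rw [hy, inner_add_right, inner_smul_right, hbu, mul_zero, zero_add, inner_smul_left,
        inner_self_eq_norm_sq_to_K, map_inv₀, Complex.conj_ofReal]
      field_simp [norm_ne_zero_iff.2 hw0]
      rfl
    have := hb b (by simp [b, norm_smul, hw0]) hub
    rwa [hby, Complex.norm_real, Real.norm_of_nonneg (norm_nonneg _)] at this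
  calc ‖y‖ = ‖⟪u, y⟫_ℂ • u + w‖ := congrArg _ hy
    _ ≤ ‖⟪u, y⟫_ℂ • u‖ + ‖w‖ := norm_add_le _ _
    _ ≤ a + c := by rw [norm_smul, hu, mul_one]; exact add_le_add ha hw

/-- `ζ ↦ ⟪v, h (ζ • v)⟫ / ζ` (when `h 0 = 0`), with its removable singularity at `0` filled in. -/
def innerSlice (h : E → E) (v : E) : ℂ → ℂ := dslope (fun ζ : ℂ => ⟪v, h (ζ • v)⟫_ℂ) 0

theorem smul_mem_ball_of_mem_ball {v : E} {ζ : ℂ} (hζ : ζ ∈ ball (0 : ℂ) ‖v‖⁻¹) :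
    ζ • v ∈ ball (0 : E) 1 := by
  rw [mem_ball_zero_iff] at hζ ⊢
  rcases eq_or_ne v 0 with rfl | hv
  · simp
  calc ‖ζ • v‖ = ‖ζ‖ * ‖v‖ := norm_smul _ _
    _ < ‖v‖⁻¹ * ‖v‖ := by gcongr
    _ = 1 := inv_mul_cancel₀ (norm_ne_zero_iff.2 hv)

theorem innerSlice_of_ne {h : E → E} (h0 : h 0 = 0) (v : E) {ζ : ℂ} (hζ : ζ ≠ 0) :
    innerSlice h v ζ = ⟪v, h (ζ • v)⟫_ℂ / ζ := by
  rw [innerSlice, dslope_of_ne _ hζ, slope_def_field]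
  simp [h0]

theorem innerSlice_zero {h : E → E} {A : E →L[ℂ] E} (hA : HasFDerivAt h A 0) (v : E) :
    innerSlice h v 0 = ⟪v, A v⟫_ℂ := by
  rw [innerSlice, dslope_same]
  have hline : HasDerivAt (fun ζ : ℂ => ζ • v) v 0 := by
    simpa using (hasDerivAt_id (0 : ℂ)).smul_const v
  rw [← zero_smul ℂ v] at hA
  exact ((innerSL ℂ v).hasFDerivAt.comp_hasDerivAt 0 (hA.comp_hasDerivAt 0 hline)).deriv

theorem differentiableOn_innerSlice {h : E → E} (hd : DifferentiableOn ℂ h (ball 0 1)) (v : E) :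
    DifferentiableOn ℂ (innerSlice h v) (ball 0 ‖v‖⁻¹) := by
  rcases eq_or_ne v 0 with rfl | hv
  · simpa using differentiableOn_empty
  refine (Complex.differentiableOn_dslope (ball_mem_nhds 0 (by positivity))).2 fun ζ hζ => ?_
  have hh := hd.differentiableAt (isOpen_ball.mem_nhds (smul_mem_ball_of_mem_ball hζ))
  exact ((innerSL ℂ v).differentiableAt.comp ζ
    (hh.comp ζ (differentiableAt_id.smul_const v))).differentiableWithinAt

theorem re_innerSlice_nonneg {h : E → E} (hd : DifferentiableOn ℂ h (ball 0 1)) (h0 : h 0 = 0)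
    (hre : ∀ w ∈ ball (0 : E) 1, 0 ≤ (⟪h w, w⟫_ℂ).re) (v : E) :
    ∀ ζ ∈ ball (0 : ℂ) ‖v‖⁻¹, 0 ≤ (innerSlice h v ζ).re := by
  have hpunct : ∀ ζ ∈ ball (0 : ℂ) ‖v‖⁻¹, ζ ≠ 0 → 0 ≤ (innerSlice h v ζ).re := by
    intro ζ hζ hζ0
    have hslice : innerSlice h v ζ = ⟪ζ • v, h (ζ • v)⟫_ℂ * ((Complex.normSq ζ)⁻¹ : ℝ) := by
      rw [innerSlice_of_ne h0 v hζ0, div_eq_mul_inv, Complex.inv_def, inner_smul_left]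
      ring
    rw [hslice, Complex.re_mul_ofReal]
    have := hre _ (smul_mem_ball_of_mem_ball hζ)
    rw [← inner_conj_symm, Complex.conj_re] at this
    exact mul_nonneg this (inv_nonneg.2 (Complex.normSq_nonneg _))
  intro ζ hζ
  rcases eq_or_ne ζ 0 with rfl | hζ0
  · have hcont : ContinuousAt (fun ζ => (innerSlice h v ζ).re) 0 :=
      Complex.continuous_re.continuousAt.comp
        ((differentiableOn_innerSlice hd v).differentiableAt (isOpen_ball.mem_nhds hζ)).continuousAt
    refine ge_of_tendsto (hcont.tendsto.mono_left (nhdsWithin_le_nhds (s := {0}ᶜ))) ?_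
    filter_upwards [nhdsWithin_le_nhds (isOpen_ball.mem_nhds hζ), self_mem_nhdsWithin]
      with w hw hw0 using hpunct w hw hw0
  · exact hpunct ζ hζ hζ0

theorem norm_inner_apply_smul_sub_le {h : E → E} (hd : DifferentiableOn ℂ h (ball 0 1))
    (h0 : h 0 = 0) (hre : ∀ w ∈ ball (0 : E) 1, 0 ≤ (⟪h w, w⟫_ℂ).re) {A : E →L[ℂ] E}
    (hA : HasFDerivAt h A 0) (v : E) {ρ : ℝ} (hρ : 0 < ρ) (hρv : ρ * ‖v‖ < 1) :
    ‖⟪v, h ((ρ : ℂ) • v)⟫_ℂ - ρ * ⟪v, A v⟫_ℂ‖ ≤ 2 * ‖A‖ * ‖v‖ ^ 3 * ρ ^ 2 / (1 - ρ * ‖v‖) := by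
  rcases eq_or_ne v 0 with rfl | hv
  · simp
  have hρ0 : (ρ : ℂ) ≠ 0 := Complex.ofReal_ne_zero.2 hρ.ne'
  have hvpos : 0 < ‖v‖ := norm_pos_iff.2 hv
  have hρv' : ρ < ‖v‖⁻¹ := by rwa [← one_div, lt_div_iff₀ hvpos]
  have hρball : (ρ : ℂ) ∈ ball (0 : ℂ) ‖v‖⁻¹ := by
    rwa [mem_ball_zero_iff, Complex.norm_real, Real.norm_of_nonneg hρ.le]
  have hslice := Complex.norm_sub_le_of_re_nonneg (differentiableOn_innerSlice hd v)
    (re_innerSlice_nonneg hd h0 hre v) hρball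
  rw [innerSlice_of_ne h0 v hρ0, innerSlice_zero hA v,
    Complex.norm_real, Real.norm_of_nonneg hρ.le] at hslice
  have hre_le : (⟪v, A v⟫_ℂ).re ≤ ‖A‖ * ‖v‖ ^ 2 :=
    (Complex.re_le_norm _).trans ((norm_inner_apply_le A v v).trans_eq (by ring))
  have hgap : 0 < ‖v‖⁻¹ - ρ := sub_pos.2 hρv'
  calc ‖⟪v, h ((ρ : ℂ) • v)⟫_ℂ - ρ * ⟪v, A v⟫_ℂ‖
      = ‖(ρ : ℂ) * (⟪v, h ((ρ : ℂ) • v)⟫_ℂ / ρ - ⟪v, A v⟫_ℂ)‖ := by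
        rw [mul_sub, mul_div_cancel₀ _ hρ0]
    _ = ρ * ‖⟪v, h ((ρ : ℂ) • v)⟫_ℂ / ρ - ⟪v, A v⟫_ℂ‖ := by
        rw [norm_mul, Complex.norm_real, Real.norm_of_nonneg hρ.le]
    _ ≤ ρ * (2 * (⟪v, A v⟫_ℂ).re * ρ / (‖v‖⁻¹ - ρ)) := by gcongr
    _ ≤ ρ * (2 * (‖A‖ * ‖v‖ ^ 2) * ρ / (‖v‖⁻¹ - ρ)) := by gcongr
    _ = 2 * ‖A‖ * ‖v‖ ^ 3 * ρ ^ 2 / (1 - ρ * ‖v‖) := by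
        field_simp

theorem norm_inner_orthogonal_sub_le {h : E → E} (hd : DifferentiableOn ℂ h (ball 0 1))
    (h0 : h 0 = 0) (hre : ∀ w ∈ ball (0 : E) 1, 0 ≤ (⟪h w, w⟫_ℂ).re) {A : E →L[ℂ] E}
    (hA : HasFDerivAt h A 0) {u b : E} (hu : ‖u‖ = 1) (hb : ‖b‖ = 1) (hub : ⟪u, b⟫_ℂ = 0)
    {ρ ε S : ℝ} (hρ : 0 < ρ) (hε : 0 < ε) (hS0 : 0 ≤ S) (hS : 1 + ε ^ 2 ≤ S ^ 2)
    (hρS : ρ * S < 1) :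
    ε * ‖⟪b, h ((ρ : ℂ) • u)⟫_ℂ - ρ * ⟪b, A u⟫_ℂ‖ ≤ 2 * ‖A‖ * S ^ 3 * ρ ^ 2 / (1 - ρ * S) := by
  set v : ℂ → E := fun x => u + x • b
  have hv : ∀ x ∈ closedBall (0 : ℂ) ε, ‖v x‖ ≤ S := by
    intro x hx
    have hx' : ‖x‖ ≤ ε := mem_closedBall_zero_iff.1 hx
    have hpyth : ‖v x‖ * ‖v x‖ = 1 + ‖x‖ ^ 2 := by
      rw [norm_add_sq_eq_norm_sq_add_norm_sq_of_inner_eq_zero _ _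
        (by rw [inner_smul_right, hub, mul_zero]), norm_smul, hu, hb]
      ring
    nlinarith [norm_nonneg (v x), norm_nonneg x]
  have hball : ∀ x ∈ closedBall (0 : ℂ) ε, (ρ : ℂ) • v x ∈ ball (0 : E) 1 := by
    intro x hx
    rw [mem_ball_zero_iff, norm_smul, Complex.norm_real, Real.norm_of_nonneg hρ.le]
    exact (mul_le_mul_of_nonneg_left (hv x hx) hρ.le).trans_lt hρS
  set F : E → ℂ → ℂ := fun c x => ⟪c, h ((ρ : ℂ) • v x)⟫_ℂ - ρ * ⟪c, A (v x)⟫_ℂ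
  have hF : ∀ c, DifferentiableOn ℂ (F c) (closedBall 0 ε) := by
    intro c x hx
    have hh : DifferentiableAt ℂ (fun x => h ((ρ : ℂ) • v x)) x :=
      (hd.differentiableAt (isOpen_ball.mem_nhds (hball x hx))).comp x (by fun_prop)
    have hAv : DifferentiableAt ℂ (fun x => A (v x)) x := by fun_prop
    exact (((innerSL ℂ c).differentiableAt.comp x hh).sub ((differentiableAt_const _).mul
      ((innerSL ℂ c).differentiableAt.comp x hAv))).differentiableWithinAt
  have hsphere : ∀ x ∈ sphere (0 : ℂ) ε, ‖F u x + conj x * F b x‖ ≤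
      2 * ‖A‖ * S ^ 3 * ρ ^ 2 / (1 - ρ * S) := by
    intro x hx
    have hvx := hv x (sphere_subset_closedBall hx)
    have hF_add : F u x + conj x * F b x = ⟪v x, h ((ρ : ℂ) • v x)⟫_ℂ - ρ * ⟪v x, A (v x)⟫_ℂ := by
      simp only [F, v, inner_add_left, inner_smul_left]
      ring
    rw [hF_add]
    refine (norm_inner_apply_smul_sub_le hd h0 hre hA (v x) hρ
      ((mul_le_mul_of_nonneg_left hvx hρ.le).trans_lt hρS)).trans ?_
    have : 0 < 1 - ρ * S := sub_pos.2 hρS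
    gcongr
  simpa [F, v] using Complex.mul_norm_le_of_norm_add_conj_mul_le hε (hF u) (hF b) hsphere

theorem norm_le_of_re_inner_nonneg {h : E → E} (hd : DifferentiableOn ℂ h (ball 0 1))
    (h0 : h 0 = 0) (hre : ∀ w ∈ ball (0 : E) 1, 0 ≤ (⟪h w, w⟫_ℂ).re) {A : E →L[ℂ] E}
    (hA : HasFDerivAt h A 0) {z : E} (hz : ‖z‖ < 1) :
    ‖h z‖ ≤ 4 * ‖z‖ / (1 - ‖z‖) ^ 2 * ‖A‖ := by
  rcases eq_or_ne z 0 with rfl | hz0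
  · simp [h0]
  set ρ := ‖z‖
  have hρ : 0 < ρ := norm_pos_iff.2 hz0
  have hρ0 : (ρ : ℂ) ≠ 0 := Complex.ofReal_ne_zero.2 hρ.ne'
  set u := (ρ : ℂ)⁻¹ • z
  have hu : ‖u‖ = 1 := by
    rw [norm_smul, norm_inv, Complex.norm_real, Real.norm_of_nonneg hρ.le, inv_mul_cancel₀ hρ.ne']
  have hzu : (ρ : ℂ) • u = z := smul_inv_smul₀ hρ0 z
  -- `S ≥ √(1 + (1 - ρ)²)` is chosen rational in `ρ` so that the final inequality is polynomial.
  set S := 1 + (1 - ρ) ^ 2 / 2 with hS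
  have hρS : ρ * S < 1 := mul_one_add_sq_div_two_lt_one hρ.le hz
  have hcomponent : ∀ b : E, ‖b‖ = 1 →
      ‖⟪b, h z⟫_ℂ‖ ≤ ‖⟪b, h z⟫_ℂ - ρ * ⟪b, A u⟫_ℂ‖ + ρ * ‖A‖ := by
    intro b hb
    refine (norm_le_norm_sub_add _ (ρ * ⟪b, A u⟫_ℂ)).trans (add_le_add le_rfl ?_)
    rw [norm_mul, Complex.norm_real, Real.norm_of_nonneg hρ.le]
    exact mul_le_mul_of_nonneg_left
      ((norm_inner_apply_le A b u).trans_eq (by rw [hb, hu]; ring)) hρ.le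
  refine (norm_le_add_of_norm_inner_le hu (by positivity) ?_ fun b hb hub => ?_).trans
    (growth_bound_le hρ.le hz (norm_nonneg A))
  · have hradial := norm_inner_apply_smul_sub_le hd h0 hre hA u hρ (by rwa [hu, mul_one])
    rw [hzu, hu] at hradial
    refine (hcomponent u hu).trans ?_
    simp only [one_pow, mul_one] at hradial
    linarith
  · have htangential := norm_inner_orthogonal_sub_le hd h0 hre hA hu hb hub hρ (sub_pos.2 hz)
      (by positivity) (by rw [hS]; nlinarith [sq_nonneg ((1 - ρ) ^ 2)]) hρS
    rw [hzu] at htangential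
    refine (hcomponent b hb).trans ?_
    rw [add_comm (ρ * ‖A‖)]
    gcongr
    rw [le_div_iff₀ (sub_pos.2 hz), mul_comm]
    exact htangential

end InnerProductSpace

theorem statement13_general (q : ℕ) (h : Cq q → Cq q) (hN : MemN q h)
    (A : Cq q →L[ℂ] Cq q) (hA : fderiv ℂ h 0 = A) :
    ∀ r : ℝ, 0 ≤ r → r < 1 → ∀ z : Cq q, ‖z‖ ≤ r →
      ‖h z‖ ≤ 4 * r / (1 - r) ^ 2 * ‖A‖ := by
  intro r _ hr1 z hz
  obtain ⟨hd, h0, hpos⟩ := hN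
  have hre : ∀ w ∈ ball (0 : Cq q) 1, 0 ≤ (⟪h w, w⟫_ℂ).re := by
    intro w hw
    rcases eq_or_ne w 0 with rfl | hw0
    · simp [h0]
    · exact (hpos w hw hw0).le
  have hA' : HasFDerivAt h A 0 :=
    hA ▸ (hd.differentiableAt (ball_mem_nhds 0 one_pos)).hasFDerivAt
  calc ‖h z‖ ≤ 4 * ‖z‖ / (1 - ‖z‖) ^ 2 * ‖A‖ :=
        norm_le_of_re_inner_nonneg hd h0 hre hA' (hz.trans_lt hr1)
    _ ≤ 4 * r / (1 - r) ^ 2 * ‖A‖ := by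
        gcongr

/-- Graham–Hamada–Kohr–Kohr estimate: for `h ∈ 𝒩` with differential `A` at `0`,
`|h(z)| ≤ 4r/(1-r)²·‖A‖` for `|z| ≤ r < 1`. -/
theorem statement13 (q : ℕ) (hq : 1 ≤ q) (h : Cq q → Cq q) (hN : MemN q h)
    (A : Cq q →L[ℂ] Cq q) (hA : fderiv ℂ h 0 = A) :
    ∀ r : ℝ, 0 ≤ r → r < 1 → ∀ z : Cq q, ‖z‖ ≤ r →
      ‖h z‖ ≤ 4 * r / (1 - r) ^ 2 * ‖A‖ :=
  statement13_general q h hN A hA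
end
end
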